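/- Let A_Γ be a T-algebra with the ScP. Then every x ∈ X(Γ,ℵ₀) has countable character in X(Γ): there is a countable family of open sets in the Stone topology on X(Γ) forming a neighborhood base at x. -/

import Mathlib

open Set

noncomputable section

/-- The least uncountable ordinal `ω₁`. -/
def omega1 : Ordinal := (Cardinal.aleph 1).ord

/-- `⋃_{γ ∈ F} a_γ` for a finite set `F` of indices. -/
def unionFin (a : Ordinal → Set ℕ) (F : Finset Ordinal) : Set ℕ :=
  ⋃ γ ∈ F, a γ

/-- A sequence of subsets of `ℕ`, with indices from a (downward closed) domain `D`
of ordinals, is coherent if for all `α ≤ β` in the domain there is a finite `F ⊆ α`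
with `a α ∩ a β ⊆ ⋃_{γ∈F} a γ` or `a α ⊆ a β ∪ ⋃_{γ∈F} a γ`. -/
def CoherentOn (D : Set Ordinal) (a : Ordinal → Set ℕ) : Prop :=
  ∀ α β : Ordinal, α ≤ β → β ∈ D →
    ∃ F : Finset Ordinal, (∀ γ ∈ F, γ < α) ∧
      (a α ∩ a β ⊆ unionFin a F ∨ a α ⊆ a β ∪ unionFin a F)

/-- Properness: no `a β` is contained in a finite union of earlier terms. -/
def ProperOn (D : Set Ordinal) (a : Ordinal → Set ℕ) : Prop :=
  ∀ β ∈ D, ∀ F : Finset Ordinal, (∀ γ ∈ F, γ < β) → ¬ a β ⊆ unionFin a F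

/-- `â_β = { α ≤ β : a α ∖ a β ⊆ ⋃_{γ∈F} a γ for some finite F ⊆ α }`. -/
def hatA (a : Ordinal → Set ℕ) (β : Ordinal) : Set Ordinal :=
  { α | α ≤ β ∧ ∃ F : Finset Ordinal, (∀ γ ∈ F, γ < α) ∧ a α \ a β ⊆ unionFin a F }

/-- The topology `τ(A)` on `λ + 1 = {α : α ≤ λ}` generated by the subbase
consisting of the sets `â_β` and their complements, `β < λ`. -/
def tau (lam : Ordinal) (a : Ordinal → Set ℕ) :
    TopologicalSpace {α : Ordinal // α ≤ lam} :=
  TopologicalSpace.generateFrom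
    { s | ∃ β < lam, s = {x : {α : Ordinal // α ≤ lam} | x.1 ∈ hatA a β} ∨
                     s = {x : {α : Ordinal // α ≤ lam} | x.1 ∈ hatA a β}ᶜ }

/-- The subspace `ω₁ = {α : α < ω₁}` of `(ω₁+1, τ(A))`. -/
def tauSub (a : Ordinal → Set ℕ) : TopologicalSpace {y : Ordinal // y < omega1} :=
  TopologicalSpace.induced
    (fun y : {y : Ordinal // y < omega1} => (⟨y.1, y.2.le⟩ : {α : Ordinal // α ≤ omega1}))
    (tau omega1 a)

/-- Closed unbounded subsets of `ω₁`. -/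
def IsClubOmega1 (C : Set Ordinal) : Prop :=
  C ⊆ Iio omega1 ∧
  (∀ α < omega1, ∃ β ∈ C, α ≤ β) ∧
  (∀ δ, δ < omega1 → δ ≠ 0 → (∀ α < δ, ∃ β ∈ C, α < β ∧ β < δ) → δ ∈ C)

/-- Stationary subsets of `ω₁`: sets meeting every club. -/
def IsStationaryOmega1 (S : Set Ordinal) : Prop :=
  ∀ C : Set Ordinal, IsClubOmega1 C → (S ∩ C).Nonempty

/-- The stationary covering property for a coherent sequence whose index domain is `D`:
if the sequence has length `ω₁` (i.e. `Iio ω₁ ⊆ D`), then every stationary `S ⊆ ω₁`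
together with some finite `F` covers, i.e. `⋃_{γ ∈ S ∪ F} â_γ = ω₁`.  (Sequences of
length `< ω₁` have the ScP by convention.) -/
def HasScP (D : Set Ordinal) (a : Ordinal → Set ℕ) : Prop :=
  Iio omega1 ⊆ D →
    ∀ S : Set Ordinal, S ⊆ Iio omega1 → IsStationaryOmega1 S →
      ∃ F : Finset Ordinal, (⋃ γ ∈ S ∪ (↑F : Set Ordinal), hatA a γ) = Iio omega1

/-- A node of the tree `2^{≤ω₁}`: a function `val` defined on the ordinals `< len`
(with the canonical value `false` beyond `len`). -/
structure Node where
  len : Ordinal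
  val : Ordinal → Bool
  canon : ∀ α, len ≤ α → val α = false

open Classical in
/-- The restriction `x ↾ β`. -/
def Node.restrict (x : Node) (β : Ordinal) : Node where
  len := β
  val := fun α => if α < β then x.val α else false
  canon := fun α h => if_neg (not_lt.2 h)

/-- `τ.Extends σ` means `σ ⊆ τ`, i.e. `τ` extends `σ`. -/
def Node.Extends (τ σ : Node) : Prop :=
  σ.len ≤ τ.len ∧ ∀ α < σ.len, τ.val α = σ.val α

/-- Successor ordinals. -/
def IsSucc (o : Ordinal) : Prop := ∃ β, o = β + 1

open Classical in
/-- `σ†`: if `σ` has successor length `β+1`, the node agreeing with `σ` except at `β`;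
otherwise `σ` itself. -/
def Node.dagger (σ : Node) : Node :=
  if h : IsSucc σ.len then
    { len := σ.len
      val := fun α => if α = Classical.choose h then !(σ.val α) else σ.val α
      canon := by
        intro α hα
        have hs := Classical.choose_spec h
        have hne : α ≠ Classical.choose h := by
          intro he
          rw [hs, he] at hα
          rw [Ordinal.add_one_eq_succ] at hα
          exact absurd hα (not_le.2 (Order.lt_succ (Classical.choose h)))
        show (if α = Classical.choose h then !(σ.val α) else σ.val α) = false
        rw [if_neg hne]
        exact σ.canon α hα }
  else σ

open Classical in
/-- `σ ⌢ b` : the node `σ` extended by one value `b`. -/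
def Node.snoc (σ : Node) (b : Bool) : Node where
  len := σ.len + 1
  val := fun α => if α = σ.len then b else σ.val α
  canon := by
    intro α hα
    have h1 : σ.len < α := by
      have h2 : σ.len < σ.len + 1 := by
        rw [Ordinal.add_one_eq_succ]; exact Order.lt_succ σ.len
      exact lt_of_lt_of_le h2 hα
    show (if α = σ.len then b else σ.val α) = false
    rw [if_neg h1.ne']
    exact σ.canon α h1.le

open Classical in
/-- `x ⌢ σ` : concatenation of nodes. -/
def Node.append (x σ : Node) : Node where
  len := x.len + σ.len
  val := fun α => if α < x.len then x.val α else σ.val (α - x.len)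
  canon := by
    intro α hα
    have h1 : ¬ α < x.len := not_lt.2 (le_trans (le_add_of_nonneg_right (by simp)) hα)
    show (if α < x.len then x.val α else σ.val (α - x.len)) = false
    rw [if_neg h1]
    apply σ.canon
    by_contra h2
    rw [not_le] at h2
    have h3 : α ≤ x.len + (α - x.len) := Ordinal.le_add_sub α x.len
    have h4 : x.len + (α - x.len) < x.len + σ.len := (add_lt_add_iff_left x.len).2 h2
    exact absurd hα (not_le.2 (lt_of_le_of_lt h3 h4))

/-- A subtree of `2^{<ω₁}` that is downward closed, twinned and has no maximal elements. -/
structure GoodTree (Γ : Set Node) : Prop where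
  lt_omega1 : ∀ σ ∈ Γ, σ.len < omega1
  downward : ∀ σ ∈ Γ, ∀ β ≤ σ.len, σ.restrict β ∈ Γ
  twinned : ∀ σ ∈ Γ, σ.dagger ∈ Γ
  noMax : ∀ σ ∈ Γ, ∃ τ ∈ Γ, σ.len < τ.len ∧ τ.Extends σ

/-- `X(Γ)`: the maximal branches of `Γ`, i.e. the minimal elements of `2^{≤ω₁} ∖ Γ`. -/
def XGamma (Γ : Set Node) : Set Node :=
  { x | x.len ≤ omega1 ∧ x ∉ Γ ∧ ∀ β < x.len, x.restrict β ∈ Γ }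

/-- The index domain of the branch sequence `A_{Γ,x}`. -/
def branchDomain (Γ : Set Node) (x : Node) : Set Ordinal :=
  { α | α + 1 ≤ x.len ∧ x.restrict (α + 1) ∈ Γ }

/-- The branch sequence `A_{Γ,x}`, `a^x_α = a_{x ↾ (α+1)}`. -/
def branchSeq (a : Node → Set ℕ) (x : Node) : Ordinal → Set ℕ :=
  fun α => a (x.restrict (α + 1))

/-- A `𝕋`-algebra on the tree `Γ`. -/
structure IsTAlgebra (Γ : Set Node) (a : Node → Set ℕ) : Prop where
  tree : GoodTree Γ
  empty_of_not_succ : ∀ σ ∈ Γ, ¬ IsSucc σ.len → a σ = ∅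
  compl_dagger : ∀ σ ∈ Γ, IsSucc σ.len → a σ.dagger = (a σ)ᶜ
  branch_coherent : ∀ x : Node, x.len ≤ omega1 →
    CoherentOn (branchDomain Γ x) (branchSeq a x)
  branch_proper : ∀ x : Node, x.len ≤ omega1 →
    ProperOn (branchDomain Γ x) (branchSeq a x)

/-- The Boolean subalgebra of `P(ℕ)` generated by a family `G`. -/
inductive GenBool (G : Set (Set ℕ)) : Set ℕ → Prop
  | basic (s : Set ℕ) : s ∈ G → GenBool G s
  | empty : GenBool G ∅
  | compl (s : Set ℕ) : GenBool G s → GenBool G sᶜ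
  | inter (s t : Set ℕ) : GenBool G s → GenBool G t → GenBool G (s ∩ t)

/-- `B_Γ`: the Boolean subalgebra of `P(ℕ)` generated by `{a_σ : σ ∈ Γ}`. -/
def BGamma (Γ : Set Node) (a : Node → Set ℕ) : Set (Set ℕ) :=
  { b | GenBool { s | ∃ σ ∈ Γ, s = a σ } b }

/-- A finite intersection from the family `{ℕ ∖ a_{x↾(α+1)} : α + 1 ≤ λ_x}`. -/
def finInterCompl (a : Node → Set ℕ) (x : Node) (F : Finset Ordinal) : Set ℕ :=
  ⋂ α ∈ F, (a (x.restrict (α + 1)))ᶜ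

/-- The ultrafilter `U_x` on `B_Γ` generated by the finite intersections of
`{ℕ ∖ a_{x↾(α+1)} : α + 1 ≤ λ_x}`. -/
def Ux (Γ : Set Node) (a : Node → Set ℕ) (x : Node) : Set (Set ℕ) :=
  { b | b ∈ BGamma Γ a ∧
    ∃ F : Finset Ordinal, (∀ α ∈ F, α + 1 ≤ x.len) ∧ finInterCompl a x F ⊆ b }

/-- The Stone topology on `X(Γ)`, with subbasic open sets `{z : b ∈ U_z}`, `b ∈ B_Γ`. -/
def stoneTop (Γ : Set Node) (a : Node → Set ℕ) :
    TopologicalSpace {z : Node // z ∈ XGamma Γ} :=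
  TopologicalSpace.generateFrom
    { s | ∃ b ∈ BGamma Γ a, s = { z : {z : Node // z ∈ XGamma Γ} | b ∈ Ux Γ a z.1 } }

/-- An ultrafilter on a Boolean subalgebra `B` of `P(ℕ)`. -/
def IsUltrafilterOn (B U : Set (Set ℕ)) : Prop :=
  U ⊆ B ∧
  (∀ s ∈ U, ∀ t ∈ U, s ∩ t ∈ U) ∧
  (∀ s ∈ U, ∀ t ∈ B, s ⊆ t → t ∈ U) ∧
  ∅ ∉ U ∧
  (∀ b ∈ B, Xor' (b ∈ U) (bᶜ ∈ U))

/-- The length-lexicographic (strict) order on finite binary strings. -/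
def LenLexLT (σ τ : Node) : Prop :=
  σ.len < τ.len ∨ (σ.len = τ.len ∧ ∃ i < σ.len, σ.val i = false ∧ τ.val i = true ∧
    ∀ j < i, σ.val j = τ.val j)

/-- `e` is the standard length-lexicographic enumeration of `2^{<ω}`. -/
def IsStdEnum (e : ℕ → Node) : Prop :=
  (∀ k, (e k).len < Ordinal.omega0) ∧
  (∀ σ : Node, σ.len < Ordinal.omega0 → ∃ k, e k = σ) ∧
  (∀ k l : ℕ, k < l → LenLexLT (e k) (e l))

/-- `⋃_{k<n} c^x_k` where `c^x_n = a^x_{e(n)} ∖ ⋃_{k<n} c^x_k` (recursively). -/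
def cUnion (a : Node → Set ℕ) (x : Node) (eb : ℕ → Ordinal) : ℕ → Set ℕ
  | 0 => ∅
  | n + 1 => cUnion a x eb n ∪ (a (x.restrict (eb n + 1)) \ cUnion a x eb n)

/-- `c^x_n = a^x_{e(n)} ∖ ⋃_{k<n} c^x_k`. -/
def cSeq (a : Node → Set ℕ) (x : Node) (eb : ℕ → Ordinal) (n : ℕ) : Set ℕ :=
  a (x.restrict (eb n + 1)) \ cUnion a x eb n

/-- `{x ⌢ σ : σ ∈ 2^{<ω}}`. -/
def appendSet (x : Node) : Set Node :=
  { τ | ∃ σ : Node, σ.len < Ordinal.omega0 ∧ τ = x.append σ }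

/-- The defining equations of the extension `A_Γ[π,x]`:
`a_x = ∅`, `a_{x⌢(σ⌢0)} = ⋃{c^x_k : σ⌢1 ⊆ σ_{π(k)}}`, `a_{x⌢(σ⌢1)} = ℕ ∖ a_{x⌢(σ⌢0)}`. -/
def ExtEquations (e : ℕ → Node) (π : ℕ → ℕ) (a : Node → Set ℕ) (x : Node)
    (eb : ℕ → Ordinal) (a' : Node → Set ℕ) : Prop :=
  a' x = ∅ ∧
  ∀ σ : Node, σ.len < Ordinal.omega0 →
    (a' (x.append (σ.snoc false)) =
      ⋃ k ∈ { k : ℕ | (e (π k)).Extends (σ.snoc true) }, cSeq a x eb k) ∧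
    (a' (x.append (σ.snoc true)) = (a' (x.append (σ.snoc false)))ᶜ)

/-- The full tree `2^{<ω₁}`. -/
def GammaFull : Set Node := { σ | σ.len < omega1 }

theorem natLtOmega1 (n : ℕ) : (n : Ordinal) < omega1 := by
  have h1 : (n : Ordinal) < Ordinal.omega0 := Ordinal.nat_lt_omega0 n
  have h2 : Ordinal.omega0 < omega1 := by
    rw [omega1, ← Cardinal.ord_aleph0]
    exact Cardinal.ord_lt_ord.2 (by rw [← Cardinal.aleph_zero]
                                    exact Cardinal.aleph_lt_aleph.2 zero_lt_one)
  exact h1.trans h2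

open Topology

/-!
A branch `x ∈ X(Γ)` of countable length `λ` has countable character because `U_x` is generated
by countably many sets, the finite intersections `⋂_{α ∈ F} (ℕ ∖ a_{x↾(α+1)})` with `F ⊆ λ`
finite. The open sets `{z : ⋂_{α ∈ F} (ℕ ∖ a_{x↾(α+1)}) ∈ U_z}` thus form a downward directed
family refining every subbasic neighbourhood `{z : b ∈ U_z}` of `x`: `b ∈ U_x` contains one of
the generators, and `U_z` is upward closed in `B_Γ`. The generators lie in `B_Γ` because a
maximal branch never has successor length `β + 1`: it would then coincide with a node of `Γ` of
length `β + 1` extending `x↾β`, or with its twin, and both lie in `Γ`.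
-/

theorem TopologicalSpace.exists_mem_subset_of_isOpen_generateFrom {X : Type*}
    {g 𝓑 : Set (Set X)} {x : X} (h𝓑 : 𝓑.Nonempty)
    (hinter : ∀ U ∈ 𝓑, ∀ V ∈ 𝓑, ∃ W ∈ 𝓑, W ⊆ U ∩ V)
    (hg : ∀ s ∈ g, x ∈ s → ∃ U ∈ 𝓑, U ⊆ s) {V : Set X}
    (hV : IsOpen[TopologicalSpace.generateFrom g] V) (hxV : x ∈ V) : ∃ U ∈ 𝓑, U ⊆ V := by
  induction hV with
  | basic s hs => exact hg s hs hxV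
  | univ =>
    obtain ⟨U, hU⟩ := h𝓑
    exact ⟨U, hU, subset_univ U⟩
  | inter s t _ _ ihs iht =>
    obtain ⟨U₁, hU₁, hs⟩ := ihs hxV.1
    obtain ⟨U₂, hU₂, ht⟩ := iht hxV.2
    obtain ⟨W, hW, hWsub⟩ := hinter U₁ hU₁ U₂ hU₂
    exact ⟨W, hW, hWsub.trans (inter_subset_inter hs ht)⟩
  | sUnion S _ ih =>
    obtain ⟨s, hsS, hxs⟩ := hxV
    obtain ⟨U, hU, hUs⟩ := ih s hsS hxs
    exact ⟨U, hU, hUs.trans (subset_sUnion_of_mem hsS)⟩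

theorem countable_Iio_of_lt_omega1 {lam : Ordinal} (h : lam < omega1) : (Iio lam).Countable := by
  rw [← Cardinal.le_aleph0_iff_set_countable, Cardinal.mk_Iio_ordinal, Cardinal.lift_le_aleph0,
    ← Order.lt_succ_iff, Cardinal.succ_aleph0, ← Cardinal.lt_ord]
  exact h

theorem countable_setOf_finset_add_one_le {lam : Ordinal} (h : lam < omega1) :
    {F : Finset Ordinal | ∀ α ∈ F, α + 1 ≤ lam}.Countable :=
  ((countable_ofPred_finite_subset (countable_Iio_of_lt_omega1 h)).preimage
    Finset.coe_injective).mono fun F hF =>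
      show (F : Set Ordinal).Finite ∧ (F : Set Ordinal) ⊆ Iio lam from
        ⟨F.finite_toSet, fun α hα => Order.add_one_le_iff.1 (hF α hα)⟩

attribute [ext] Node

namespace Node

theorem dagger_len (σ : Node) : σ.dagger.len = σ.len := by
  unfold dagger
  split_ifs <;> rfl

theorem dagger_val_of_len_eq {σ : Node} {β : Ordinal} (h : σ.len = β + 1) (α : Ordinal) :
    σ.dagger.val α = if α = β then !σ.val α else σ.val α := by
  have hs : IsSucc σ.len := ⟨β, h⟩
  have hβ : Classical.choose hs = β :=
    (Order.succ_injective (h.symm.trans (Classical.choose_spec hs))).symm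
  unfold dagger
  rw [dif_pos hs]
  simp only [hβ]

theorem val_eq_false_of_len_eq {σ : Node} {β α : Ordinal} (h : σ.len = β + 1) (hα : β < α) :
    σ.val α = false :=
  σ.canon α (h ▸ Order.add_one_le_of_lt hα)

theorem eq_or_eq_dagger_of_agree {σ τ : Node} {β : Ordinal} (hσ : σ.len = β + 1)
    (hτ : τ.len = β + 1) (h : ∀ α < β, τ.val α = σ.val α) : τ = σ ∨ τ = σ.dagger := by
  by_cases hβ : τ.val β = σ.val β
  · refine Or.inl (Node.ext (hτ.trans hσ.symm) (funext fun α => ?_))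
    rcases lt_trichotomy α β with hα | rfl | hα
    · exact h α hα
    · exact hβ
    · rw [val_eq_false_of_len_eq hτ hα, val_eq_false_of_len_eq hσ hα]
  · refine Or.inr (Node.ext (by rw [dagger_len, hσ, hτ]) (funext fun α => ?_))
    rw [dagger_val_of_len_eq hσ]
    rcases lt_trichotomy α β with hα | rfl | hα
    · rw [if_neg hα.ne, h α hα]
    · rw [if_pos rfl]
      revert hβ
      cases τ.val α <;> cases σ.val α <;> simp
    · rw [if_neg hα.ne', val_eq_false_of_len_eq hτ hα, val_eq_false_of_len_eq hσ hα]

end Node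

namespace GoodTree

variable {Γ : Set Node} (hΓ : GoodTree Γ)
include hΓ

theorem exists_len_eq_add_one_of_mem {y : Node} (hy : y ∈ Γ) :
    ∃ σ ∈ Γ, σ.len = y.len + 1 ∧ ∀ α < y.len, σ.val α = y.val α := by
  obtain ⟨τ, hτ, hlen, hext⟩ := hΓ.noMax y hy
  refine ⟨τ.restrict (y.len + 1), hΓ.downward τ hτ _ (Order.add_one_le_of_lt hlen), rfl,
    fun α hα => ?_⟩
  rw [← hext.2 α hα]
  exact if_pos (hα.trans (Order.lt_add_one_iff.2 le_rfl))

theorem len_ne_add_one {x : Node} (hx : x ∈ XGamma Γ) (β : Ordinal) : x.len ≠ β + 1 := by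
  intro h
  obtain ⟨σ, hσΓ, hσlen, hσval⟩ :=
    hΓ.exists_len_eq_add_one_of_mem (hx.2.2 β (h ▸ Order.lt_add_one_iff.2 le_rfl))
  have hagree : ∀ α < β, x.val α = σ.val α := fun α hα => by
    rw [hσval α hα]
    exact (if_pos hα).symm
  rcases Node.eq_or_eq_dagger_of_agree hσlen h hagree with rfl | rfl
  · exact hx.2.1 hσΓ
  · exact hx.2.1 (hΓ.twinned σ hσΓ)

theorem restrict_add_one_mem {x : Node} (hx : x ∈ XGamma Γ) {α : Ordinal}
    (h : α + 1 ≤ x.len) : x.restrict (α + 1) ∈ Γ :=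
  hx.2.2 _ (h.lt_of_ne (hΓ.len_ne_add_one hx α).symm)

end GoodTree

theorem GenBool.univ {G : Set (Set ℕ)} : GenBool G univ :=
  compl_empty ▸ GenBool.compl _ GenBool.empty

theorem GenBool.biInter_finset {G : Set (Set ℕ)} {ι : Type*} (F : Finset ι) {f : ι → Set ℕ}
    (h : ∀ i ∈ F, GenBool G (f i)) : GenBool G (⋂ i ∈ F, f i) := by
  classical
  induction F using Finset.induction_on with
  | empty => simpa using GenBool.univ
  | insert i F _ ih =>
    rw [Finset.set_biInter_insert]
    exact GenBool.inter _ _ (h i (F.mem_insert_self i))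
      (ih fun j hj => h j (Finset.mem_insert_of_mem hj))

theorem finInterCompl_mem_BGamma {Γ : Set Node} {a : Node → Set ℕ} {x : Node}
    {F : Finset Ordinal} (h : ∀ α ∈ F, x.restrict (α + 1) ∈ Γ) :
    finInterCompl a x F ∈ BGamma Γ a :=
  GenBool.biInter_finset F fun α hα => GenBool.compl _ (GenBool.basic _ ⟨_, h α hα, rfl⟩)

theorem finInterCompl_anti {a : Node → Set ℕ} {x : Node} {F G : Finset Ordinal} (h : F ⊆ G) :
    finInterCompl a x G ⊆ finInterCompl a x F :=
  biInter_subset_biInter_left (Finset.coe_subset.2 h)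

theorem mem_Ux_of_subset {Γ : Set Node} {a : Node → Set ℕ} {z : Node} {b c : Set ℕ}
    (hb : b ∈ Ux Γ a z) (hbc : b ⊆ c) (hc : c ∈ BGamma Γ a) : c ∈ Ux Γ a z :=
  ⟨hc, hb.2.imp fun _ hF => ⟨hF.1, hF.2.trans hbc⟩⟩

def stoneNbhd (Γ : Set Node) (a : Node → Set ℕ) (x : Node) (F : Finset Ordinal) :
    Set {z : Node // z ∈ XGamma Γ} :=
  {z | finInterCompl a x F ∈ Ux Γ a z.1}

section StoneNbhd

variable {Γ : Set Node} {a : Node → Set ℕ} {x : Node}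

theorem stoneNbhd_subset_of_mem_Ux {b : Set ℕ} (hb : b ∈ Ux Γ a x) :
    ∃ F : Finset Ordinal, (∀ α ∈ F, α + 1 ≤ x.len) ∧ stoneNbhd Γ a x F ⊆ {z | b ∈ Ux Γ a z.1} :=
  let ⟨hbB, F, hF, hFb⟩ := hb
  ⟨F, hF, fun _ hz => mem_Ux_of_subset hz hFb hbB⟩

variable (hΓ : GoodTree Γ) (hx : x ∈ XGamma Γ)
include hΓ hx

theorem finInterCompl_mem_BGamma_of_le_len {F : Finset Ordinal} (hF : ∀ α ∈ F, α + 1 ≤ x.len) :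
    finInterCompl a x F ∈ BGamma Γ a :=
  finInterCompl_mem_BGamma fun α hα => hΓ.restrict_add_one_mem hx (hF α hα)

theorem isOpen_stoneNbhd {F : Finset Ordinal} (hF : ∀ α ∈ F, α + 1 ≤ x.len) :
    IsOpen[stoneTop Γ a] (stoneNbhd Γ a x F) :=
  TopologicalSpace.GenerateOpen.basic _
    ⟨_, finInterCompl_mem_BGamma_of_le_len hΓ hx hF, rfl⟩

theorem mem_stoneNbhd_self {F : Finset Ordinal} (hF : ∀ α ∈ F, α + 1 ≤ x.len) :
    ⟨x, hx⟩ ∈ stoneNbhd Γ a x F :=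
  ⟨finInterCompl_mem_BGamma_of_le_len hΓ hx hF, F, hF, subset_rfl⟩

theorem stoneNbhd_union_subset {F G : Finset Ordinal} (hF : ∀ α ∈ F, α + 1 ≤ x.len)
    (hG : ∀ α ∈ G, α + 1 ≤ x.len) :
    stoneNbhd Γ a x (F ∪ G) ⊆ stoneNbhd Γ a x F ∩ stoneNbhd Γ a x G := fun _ hz =>
  ⟨mem_Ux_of_subset hz (finInterCompl_anti Finset.subset_union_left)
      (finInterCompl_mem_BGamma_of_le_len hΓ hx hF),
    mem_Ux_of_subset hz (finInterCompl_anti Finset.subset_union_right)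
      (finInterCompl_mem_BGamma_of_le_len hΓ hx hG)⟩

end StoneNbhd

theorem stmt8_general (Γ : Set Node) (a : Node → Set ℕ) (hT : IsTAlgebra Γ a)
    (x : {z : Node // z ∈ XGamma Γ}) (hx : x.1.len < omega1) :
    ∃ 𝓑 : Set (Set {z : Node // z ∈ XGamma Γ}), 𝓑.Countable ∧
      (∀ U ∈ 𝓑, @IsOpen _ (stoneTop Γ a) U ∧ x ∈ U) ∧
      (∀ V : Set {z : Node // z ∈ XGamma Γ},
        @IsOpen _ (stoneTop Γ a) V → x ∈ V → ∃ U ∈ 𝓑, U ⊆ V) := by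
  obtain ⟨x, hxX⟩ := x
  have hΓ := hT.tree
  refine ⟨stoneNbhd Γ a x '' {F | ∀ α ∈ F, α + 1 ≤ x.len},
    (countable_setOf_finset_add_one_le hx).image _, ?_, fun V hV hxV => ?_⟩
  · rintro _ ⟨F, hF, rfl⟩
    exact ⟨isOpen_stoneNbhd hΓ hxX hF, mem_stoneNbhd_self hΓ hxX hF⟩
  refine TopologicalSpace.exists_mem_subset_of_isOpen_generateFrom ?_ ?_ ?_ hV hxV
  · exact ⟨_, ∅, by simp, rfl⟩
  · rintro _ ⟨F, hF, rfl⟩ _ ⟨G, hG, rfl⟩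
    exact ⟨_, ⟨F ∪ G, fun α hα => (Finset.mem_union.1 hα).elim (hF α) (hG α), rfl⟩,
      stoneNbhd_union_subset hΓ hxX hF hG⟩
  · rintro _ ⟨b, -, rfl⟩ hb
    obtain ⟨F, hF, hsub⟩ := stoneNbhd_subset_of_mem_Ux hb
    exact ⟨_, ⟨F, hF, rfl⟩, hsub⟩

/-- If a `𝕋`-algebra has the ScP, then every `x ∈ X(Γ,ℵ₀)` has countable character
in the Stone topology on `X(Γ)`: there is a countable neighborhood base at `x`
consisting of open sets. -/
theorem stmt8 (Γ : Set Node) (a : Node → Set ℕ) (hT : IsTAlgebra Γ a)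
    (hScP : ∀ x : Node, x.len = omega1 → HasScP (branchDomain Γ x) (branchSeq a x))
    (x : {z : Node // z ∈ XGamma Γ}) (hx : x.1.len < omega1) :
    ∃ 𝓑 : Set (Set {z : Node // z ∈ XGamma Γ}), 𝓑.Countable ∧
      (∀ U ∈ 𝓑, @IsOpen _ (stoneTop Γ a) U ∧ x ∈ U) ∧
      (∀ V : Set {z : Node // z ∈ XGamma Γ},
        @IsOpen _ (stoneTop Γ a) V → x ∈ V → ∃ U ∈ 𝓑, U ⊆ V) :=
  stmt8_general Γ a hT x hx

end
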